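/- arXiv:math/0306201 — 2 statements merged into one kernel-verified Lean document; each statement's English description precedes it below -/
import Mathlib

section
/- For 0 < q < 1, Jackson's q-exponential function E_q(z) = Σ_{n≥0} q^{n(n-1)/2} z^n / (q;q)_n equals the infinite product (-z;q)_∞ for all z. -/
open Finset Filter Topology

/-- Finite q-Pochhammer symbol `(q;q)_n`. -/
noncomputable def qPoch (a q : ℝ) (n : ℕ) : ℝ := ∏ j ∈ Finset.range n, (1 - a * q ^ j)

section Aux

variable {q : ℝ}

lemma qPoch_succ (a q : ℝ) (n : ℕ) : qPoch a q (n+1) = qPoch a q n * (1 - a * q ^ n) :=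
  Finset.prod_range_succ _ _

lemma qPoch_add (a q : ℝ) (m n : ℕ) :
    qPoch a q (m + n) = qPoch a q m * ∏ i ∈ Finset.range n, (1 - a * q ^ (m + i)) :=
  Finset.prod_range_add _ m n

lemma one_sub_qpow_pos (hq0 : 0 < q) (hq1 : q < 1) (k : ℕ) : 0 < 1 - q * q ^ k := by
  have : q * q ^ k ≤ q * 1 := by
    apply mul_le_mul_of_nonneg_left _ hq0.le
    exact pow_le_one₀ hq0.le hq1.le
  nlinarith

lemma qPoch_pos (hq0 : 0 < q) (hq1 : q < 1) (n : ℕ) : 0 < qPoch q q n :=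
  Finset.prod_pos fun j _ => one_sub_qpow_pos hq0 hq1 j

lemma qPoch_antitone (hq0 : 0 < q) (hq1 : q < 1) : Antitone (qPoch q q) := by
  apply antitone_nat_of_succ_le
  intro n
  rw [qPoch_succ]
  have h1 := qPoch_pos hq0 hq1 n
  have h2 : 0 < q * q ^ n := by positivity
  nlinarith

lemma choose_aux (m : ℕ) : (m+1) * ((m+1) - 1) / 2 = m * (m-1) / 2 + m := by
  rw [← Nat.choose_two_right, ← Nat.choose_two_right, Nat.choose_succ_succ,
    Nat.choose_one_right, Nat.add_comm]

/-- The Gaussian-binomial coefficient of the finite product. -/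
noncomputable def qCoef (q z : ℝ) (N n : ℕ) : ℝ :=
  q ^ (n * (n - 1) / 2) * z ^ n * qPoch q q N / (qPoch q q n * qPoch q q (N - n))

lemma pascal (hq0 : 0 < q) (hq1 : q < 1) (z : ℝ) {N m : ℕ} (hm : m < N) :
    qCoef q z (N+1) (m+1) = qCoef q z N (m+1) + qCoef q z N m * (z * q ^ N) := by
  unfold qCoef
  have h1 : N + 1 - (m+1) = (N - m - 1) + 1 := by omega
  have h2 : N - (m+1) = N - m - 1 := by omega
  have h3 : N - m = (N - m - 1) + 1 := by omega
  rw [h1, h2, h3]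
  simp only [qPoch_succ]
  rw [choose_aux, pow_add]
  have hqN : q ^ N = q ^ (N - m - 1) * q ^ m * q := by
    rw [mul_assoc, ← pow_succ, ← pow_add]; congr 1; omega
  rw [hqN]
  have hPm := (qPoch_pos hq0 hq1 m).ne'
  have hPN := (qPoch_pos hq0 hq1 N).ne'
  have hPd := (qPoch_pos hq0 hq1 (N - m - 1)).ne'
  have hfm := (one_sub_qpow_pos hq0 hq1 m).ne'
  have hfd := (one_sub_qpow_pos hq0 hq1 (N - m - 1)).ne'
  have hfN : (1 - q * (q ^ (N - m - 1) * q ^ m * q)) ≠ 0 := by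
    rw [← hqN]; exact (one_sub_qpow_pos hq0 hq1 N).ne'
  generalize N - m - 1 = d at hPd hfd hfN ⊢
  simp only [Nat.add_sub_cancel]
  generalize qPoch q q d = P at hPd ⊢
  generalize qPoch q q m = Pm at hPm ⊢
  generalize qPoch q q N = PN at hPN ⊢
  field_simp
  have hI : (1 - q * q ^ m)⁻¹ * (1 - q * q ^ m) = 1 := inv_mul_cancel₀ hfm
  linear_combination (z * z ^ m * q * q ^ d) * hI

lemma qCoef_zero (hq0 : 0 < q) (hq1 : q < 1) (z : ℝ) (N : ℕ) : qCoef q z N 0 = 1 := by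
  unfold qCoef
  norm_num [show qPoch q q 0 = 1 from Finset.prod_range_zero _,
    div_self (qPoch_pos hq0 hq1 N).ne']

lemma qCoef_last (hq0 : 0 < q) (hq1 : q < 1) (z : ℝ) (N : ℕ) :
    qCoef q z (N+1) (N+1) = qCoef q z N N * (z * q ^ N) := by
  unfold qCoef
  simp only [Nat.sub_self]
  have h0 : qPoch q q 0 = 1 := by simp [qPoch]
  rw [h0, choose_aux, pow_add]
  have hP := (qPoch_pos hq0 hq1 N).ne'
  have hP1 := (qPoch_pos hq0 hq1 (N+1)).ne'
  field_simp
  ring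

/-- The finite q-binomial theorem. -/
lemma qbinom_finite (hq0 : 0 < q) (hq1 : q < 1) (z : ℝ) (N : ℕ) :
    ∏ k ∈ range N, (1 + z * q ^ k) = ∑ n ∈ range (N+1), qCoef q z N n := by
  induction N with
  | zero => simp [qCoef, qPoch]
  | succ N IH =>
    rw [Finset.prod_range_succ, IH, Finset.sum_range_succ (fun n => qCoef q z (N+1) n) (N+1),
      Finset.sum_range_succ' (fun n => qCoef q z (N+1) n) N]
    rw [Finset.sum_congr rfl fun i hi => pascal hq0 hq1 z (mem_range.mp hi)]
    rw [Finset.sum_add_distrib, qCoef_zero hq0 hq1 z (N+1), qCoef_last hq0 hq1 z N]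
    have e1 : ∑ i ∈ range N, qCoef q z N (i+1) + 1
        = ∑ n ∈ range (N+1), qCoef q z N n := by
      rw [← qCoef_zero hq0 hq1 z N]
      exact (Finset.sum_range_succ' (fun n => qCoef q z N n) N).symm
    have e2 : ∑ i ∈ range N, qCoef q z N i * (z * q ^ N) + qCoef q z N N * (z * q ^ N)
        = (∑ n ∈ range (N+1), qCoef q z N n) * (z * q ^ N) := by
      rw [← Finset.sum_range_succ (fun n => qCoef q z N n * (z * q ^ N)) N, ← Finset.sum_mul]
    calc (∑ n ∈ range (N+1), qCoef q z N n) * (1 + z * q ^ N)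
        = (∑ i ∈ range N, qCoef q z N (i+1) + 1)
          + ((∑ i ∈ range N, qCoef q z N i * (z * q ^ N)) + qCoef q z N N * (z * q ^ N)) := by
          rw [e1, e2]; ring
      _ = _ := by ring

lemma abs_log_one_add_le' {x : ℝ} (hx : 1/2 ≤ 1 + x) : |Real.log (1 + x)| ≤ 2 * |x| := by
  have h0 : (0:ℝ) < 1 + x := by linarith
  rw [abs_le]
  constructor
  · have h1 : Real.log (1 + x)⁻¹ ≤ (1 + x)⁻¹ - 1 := Real.log_le_sub_one_of_pos (by positivity)
    rw [Real.log_inv] at h1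
    have h4 : (1 + x)⁻¹ - 1 = -x * (1 + x)⁻¹ := by field_simp; ring
    have h2 : (1 + x)⁻¹ ≤ 2 := by
      rw [show (2:ℝ) = (1/2)⁻¹ by norm_num]
      exact inv_anti₀ (by norm_num) hx
    have h5 : -x * (1 + x)⁻¹ ≤ |x| * (1 + x)⁻¹ :=
      mul_le_mul_of_nonneg_right (by linarith [neg_abs_le x]) (by positivity)
    have h6 : |x| * (1 + x)⁻¹ ≤ |x| * 2 := mul_le_mul_of_nonneg_left h2 (abs_nonneg x)
    linarith
  · have h1 : Real.log (1 + x) ≤ (1 + x) - 1 := Real.log_le_sub_one_of_pos h0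
    have := le_abs_self x
    have := abs_nonneg x
    linarith

/-- The infinite product is multipliable. -/
lemma multipliable_aux (hq0 : 0 < q) (hq1 : q < 1) (z : ℝ) :
    Multipliable (fun k : ℕ => 1 + z * q ^ k) := by
  by_cases hz : ∃ m, 1 + z * q ^ m = 0
  · obtain ⟨m, hm⟩ := hz
    refine ⟨0, ?_⟩
    have h : ∀ᶠ s : Finset ℕ in atTop, ∏ k ∈ s, (1 + z * q ^ k) = 0 := by
      filter_upwards [eventually_ge_atTop ({m} : Finset ℕ)] with s hs
      exact Finset.prod_eq_zero (hs (Finset.mem_singleton_self m)) hm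
    exact Tendsto.congr' (h.mono fun s hs => hs.symm) tendsto_const_nhds
  · push_neg at hz
    have htend : Tendsto (fun K : ℕ => |z| * q ^ K) atTop (𝓝 0) := by
      simpa using (tendsto_pow_atTop_nhds_zero_of_lt_one hq0.le hq1).const_mul |z|
    obtain ⟨K, hK⟩ := (htend.eventually_lt_const (by norm_num : (0:ℝ) < 1/2)).exists
    have hsmall : ∀ n : ℕ, |z * q ^ (n + K)| < 1/2 := by
      intro n
      rw [abs_mul, abs_pow, abs_of_pos hq0]
      calc |z| * q ^ (n + K) ≤ |z| * q ^ K := by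
            apply mul_le_mul_of_nonneg_left _ (abs_nonneg z)
            exact pow_le_pow_of_le_one hq0.le hq1.le (Nat.le_add_left K n)
        _ < 1/2 := hK
    apply Multipliable.comp_nat_add (k := K)
    have hpos : ∀ n : ℕ, 1/2 ≤ 1 + z * q ^ (n + K) := by
      intro n
      have := abs_lt.mp (hsmall n)
      linarith [this.1]
    refine Real.multipliable_of_summable_log (fun n => lt_of_lt_of_le (by norm_num) (hpos n)) ?_
    apply Summable.of_norm_bounded (g := fun n => 2 * (|z| * q ^ K) * q ^ n)
      (((summable_geometric_of_lt_one hq0.le hq1).mul_left _))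
    intro n
    rw [Real.norm_eq_abs]
    calc |Real.log (1 + z * q ^ (n + K))| ≤ 2 * |z * q ^ (n + K)| :=
          abs_log_one_add_le' (hpos n)
      _ = 2 * (|z| * q ^ K) * q ^ n := by
          rw [abs_mul, abs_pow, abs_of_pos hq0, pow_add]; ring
/-- The dominating bound is summable. -/
lemma bound_summable (hq0 : 0 < q) (hq1 : q < 1) (z : ℝ) :
    Summable (fun n : ℕ => q ^ (n * (n - 1) / 2) * (|z| + 1) ^ n / qPoch q q n) := by
  set w := |z| + 1 with hw
  have hw0 : 0 < w := by positivity
  set B : ℕ → ℝ := fun n => q ^ (n * (n - 1) / 2) * w ^ n / qPoch q q n with hB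
  have hBpos : ∀ n, 0 < B n := fun n => by
    have := qPoch_pos hq0 hq1 n; positivity
  apply summable_of_ratio_test_tendsto_lt_one (l := 0) one_pos
    (Eventually.of_forall fun n => (hBpos n).ne')
  have heq : ∀ n : ℕ, ‖B (n+1)‖ / ‖B n‖ = q ^ n * w / (1 - q * q ^ n) := by
    intro n
    rw [Real.norm_eq_abs, Real.norm_eq_abs, abs_of_pos (hBpos n), abs_of_pos (hBpos (n+1)), hB]
    simp only
    rw [choose_aux, pow_add, qPoch_succ, pow_succ]
    have h1 := (qPoch_pos hq0 hq1 n).ne'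
    have h2 := (one_sub_qpow_pos hq0 hq1 n).ne'
    have h3 : (q : ℝ) ^ (n * (n-1)/2) ≠ 0 := by positivity
    have h4 : (w : ℝ) ^ n ≠ 0 := by positivity
    field_simp
  rw [show (0:ℝ) = 0 * w / 1 by norm_num]
  refine Tendsto.congr (fun n => (heq n).symm) ?_
  apply Tendsto.div
  · exact (tendsto_pow_atTop_nhds_zero_of_lt_one hq0.le hq1).mul_const w
  · have : Tendsto (fun n : ℕ => q * q ^ n) atTop (𝓝 (q * 0)) :=
      (tendsto_pow_atTop_nhds_zero_of_lt_one hq0.le hq1).const_mul q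
    simpa using tendsto_const_nhds.sub this
  · norm_num

lemma pointwise_tendsto (hq0 : 0 < q) (hq1 : q < 1) (z : ℝ) (n : ℕ) :
    Tendsto (fun N : ℕ => if n ≤ N then qCoef q z N n else 0) atTop
      (𝓝 (q ^ (n * (n - 1) / 2) * z ^ n / qPoch q q n)) := by
  set g : ℝ := q ^ (n * (n - 1) / 2) * z ^ n / qPoch q q n with hg
  have hQ : Tendsto (fun N : ℕ => g * ∏ i ∈ range n, (1 - q * q ^ ((N - n) + i))) atTop
      (𝓝 (g * ∏ _i ∈ range n, (1:ℝ))) := by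
    apply Tendsto.const_mul
    apply tendsto_finset_prod
    intro i _
    have h2 : Tendsto (fun N : ℕ => q ^ (N - n)) atTop (𝓝 0) :=
      (tendsto_pow_atTop_nhds_zero_of_lt_one hq0.le hq1).comp (tendsto_sub_atTop_nat n)
    have h1 : Tendsto (fun N : ℕ => q ^ (N - n + i)) atTop (𝓝 0) := by
      have he : (fun N : ℕ => q ^ (N - n + i)) = fun N => q ^ (N - n) * q ^ i := by
        funext N; rw [pow_add]
      rw [he, show (0:ℝ) = 0 * q ^ i by ring]
      exact h2.mul_const _
    have := (h1.const_mul q).const_sub 1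
    simpa using this
  have heq : ∀ᶠ N in atTop, g * ∏ i ∈ range n, (1 - q * q ^ ((N - n) + i))
      = if n ≤ N then qCoef q z N n else 0 := by
    filter_upwards [eventually_ge_atTop n] with N hN
    rw [if_pos hN]
    have h0 : qPoch q q N = qPoch q q (N - n) * ∏ i ∈ range n, (1 - q * q ^ ((N - n) + i)) := by
      conv_lhs => rw [show N = (N - n) + n from by omega]
      exact qPoch_add q q (N - n) n
    unfold qCoef
    rw [h0, hg]
    have hPn := (qPoch_pos hq0 hq1 n).ne'
    have hPNn := (qPoch_pos hq0 hq1 (N - n)).ne'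
    field_simp
  have := hQ.congr' heq
  simpa using this

theorem jackson_qExp_eq_prod (q : ℝ) (hq0 : 0 < q) (hq1 : q < 1) (z : ℝ) :
    ∑' n : ℕ, q ^ (n * (n - 1) / 2) * z ^ n / qPoch q q n = ∏' k : ℕ, (1 + z * q ^ k) := by
  set F : ℕ → ℕ → ℝ := fun N n => if n ≤ N then qCoef q z N n else 0 with hF
  set B : ℕ → ℝ := fun n => q ^ (n * (n - 1) / 2) * (|z| + 1) ^ n / qPoch q q n with hB
  -- dominated convergence of the partial sums
  have hbd : ∀ N n : ℕ, ‖F N n‖ ≤ B n := by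
    intro N n
    by_cases h : n ≤ N
    · have hPn := qPoch_pos hq0 hq1 n
      have hPNn := qPoch_pos hq0 hq1 (N - n)
      have hPN := qPoch_pos hq0 hq1 N
      rw [hF]
      simp only [if_pos h, Real.norm_eq_abs]
      unfold qCoef
      have habs : |q ^ (n * (n - 1) / 2) * z ^ n * qPoch q q N /
          (qPoch q q n * qPoch q q (N - n))|
          = q ^ (n * (n - 1) / 2) * |z| ^ n * qPoch q q N /
            (qPoch q q n * qPoch q q (N - n)) := by
        rw [abs_div, abs_mul, abs_mul, abs_pow, abs_pow, abs_of_pos hq0, abs_of_pos hPN,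
          abs_mul, abs_of_pos hPn, abs_of_pos hPNn]
      rw [habs]
      have hstep : q ^ (n * (n - 1) / 2) * |z| ^ n * qPoch q q N /
          (qPoch q q n * qPoch q q (N - n))
          = (q ^ (n * (n - 1) / 2) * |z| ^ n / qPoch q q n) * (qPoch q q N / qPoch q q (N - n)) := by
        field_simp
      rw [hstep, hB]
      have h1 : q ^ (n * (n - 1) / 2) * |z| ^ n / qPoch q q n
          ≤ q ^ (n * (n - 1) / 2) * (|z| + 1) ^ n / qPoch q q n := by
        gcongr
        linarith [abs_nonneg z]
      have h2 : qPoch q q N / qPoch q q (N - n) ≤ 1 :=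
        (div_le_one hPNn).mpr (qPoch_antitone hq0 hq1 (Nat.sub_le N n))
      calc (q ^ (n * (n - 1) / 2) * |z| ^ n / qPoch q q n) * (qPoch q q N / qPoch q q (N - n))
          ≤ (q ^ (n * (n - 1) / 2) * (|z| + 1) ^ n / qPoch q q n) * 1 := by
            apply mul_le_mul h1 h2 (by positivity) (by positivity)
        _ = q ^ (n * (n - 1) / 2) * (|z| + 1) ^ n / qPoch q q n := mul_one _
    · rw [hF]
      simp only [if_neg h, norm_zero]
      have := qPoch_pos hq0 hq1 n
      positivity
  have hdom := tendsto_tsum_of_dominated_convergence (f := F)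
    (g := fun n => q ^ (n * (n - 1) / 2) * z ^ n / qPoch q q n)
    (bound := B) (bound_summable hq0 hq1 z)
    (fun n => pointwise_tendsto hq0 hq1 z n)
    (Eventually.of_forall fun N => hbd N)
  -- identify the partial sums with partial products
  have hkey : ∀ N : ℕ, ∑' n, F N n = ∏ k ∈ range N, (1 + z * q ^ k) := by
    intro N
    rw [tsum_eq_sum (s := range (N+1)) (f := F N)
      (fun n hn => if_neg (fun h => hn (mem_range.mpr (Nat.lt_succ_of_le h))))]
    rw [Finset.sum_congr rfl (fun n hn => if_pos (Nat.lt_succ_iff.mp (mem_range.mp hn)))]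
    exact (qbinom_finite hq0 hq1 z N).symm
  have hprod := (multipliable_aux hq0 hq1 z).hasProd.tendsto_prod_nat
  exact tendsto_nhds_unique (hdom.congr hkey) hprod
end Aux
end

section
/- Classical limit of big q-Laguerre polynomials: for each fixed n and real α > -1, β, lim_{q→1⁻} P_n(x; q^α, (q-1)^{-1} q^β; q) = L_n^{(α)}(1-x)/L_n^{(α)}(0), where L_n^{(α)} is the classical Laguerre polynomial. -/
noncomputable def bigqLaguerre (n : ℕ) (lam a b q : ℝ) : ℝ :=
  ∑ k ∈ Finset.range (n + 1),
    (qPoch (q ^ (-(n : ℤ))) q k * qPoch lam q k * q ^ k) /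
      (qPoch (a * q) q k * qPoch (b * q) q k * qPoch q q k)

/-- Generalized binomial coefficient `binom(r,k) = r(r-1)⋯(r-k+1)/k!`. -/
noncomputable def genBinom (r : ℝ) (k : ℕ) : ℝ :=
  (∏ i ∈ Finset.range k, (r - i)) / (Nat.factorial k)

/-- Classical Laguerre polynomial `L_n^{(α)}(y) = Σ_{k=0}^n (-1)^k binom(n+α, n-k) y^k/k!`. -/
noncomputable def laguerre (n : ℕ) (α y : ℝ) : ℝ :=
  ∑ k ∈ Finset.range (n + 1),
    (-1 : ℝ) ^ k * genBinom ((n : ℝ) + α) (n - k) * y ^ k / (Nat.factorial k)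

open Filter Set Real Finset

lemma slope_lim (c : ℝ) :
    Tendsto (fun q : ℝ => (1 - q ^ c) / (1 - q)) (nhdsWithin 1 (Set.Ioo 0 1)) (nhds c) := by
  have h : HasDerivAt (fun q : ℝ => q ^ c) (c * (1:ℝ) ^ (c - 1)) 1 :=
    Real.hasDerivAt_rpow_const (Or.inl one_ne_zero)
  rw [Real.one_rpow, mul_one] at h
  have h1 := hasDerivAt_iff_tendsto_slope.mp h
  have h2 : Tendsto (slope (fun q : ℝ => q ^ c) 1) (nhdsWithin 1 (Set.Ioo 0 1)) (nhds c) :=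
    h1.mono_left (nhdsWithin_mono 1 (fun q hq => ne_of_lt hq.2))
  refine h2.congr (fun q => ?_)
  rw [slope_def_field, Real.one_rpow]
  rw [← neg_div_neg_eq, neg_sub, neg_sub]

lemma rpow_lim (c : ℝ) :
    Tendsto (fun q : ℝ => q ^ c) (nhdsWithin 1 (Set.Ioo 0 1)) (nhds 1) := by
  have := (Real.continuousAt_rpow_const 1 c (Or.inl one_ne_zero)).continuousWithinAt (s := Set.Ioo 0 1)
  simpa [Real.one_rpow, ContinuousWithinAt] using this

lemma term_eq (n k : ℕ) (α β x : ℝ) (q : ℝ) (hq0 : 0 < q) (hq1 : q < 1) :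
    (qPoch (q ^ (-(n : ℤ))) q k * qPoch x q k * q ^ k) /
      (qPoch (q ^ α * q) q k * qPoch (q ^ β / (q - 1) * q) q k * qPoch q q k) =
    ((∏ j ∈ Finset.range k, (1 - q ^ ((j:ℝ) - n)) / (1 - q)) *
       (∏ j ∈ Finset.range k, (1 - x * q ^ j)) * q ^ k) /
      ((∏ j ∈ Finset.range k, (1 - q ^ (α + 1 + (j:ℝ))) / (1 - q)) *
       (∏ j ∈ Finset.range k, ((1 - q) + q ^ (β + 1 + (j:ℝ)))) *
       (∏ j ∈ Finset.range k, (1 - q ^ ((j:ℝ) + 1)) / (1 - q))) := by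
  have hq : (1 : ℝ) - q ≠ 0 := by linarith
  have hqm : q - 1 ≠ 0 := by linarith
  have ht : ((1:ℝ) - q) ^ k ≠ 0 := pow_ne_zero _ hq
  have hpc : ((1:ℝ) - q) ^ k = ∏ _j ∈ Finset.range k, (1 - q) := by
    rw [Finset.prod_const, Finset.card_range]
  have hA : qPoch (q ^ (-(n : ℤ))) q k =
      (∏ j ∈ Finset.range k, (1 - q ^ ((j:ℝ) - n)) / (1 - q)) * (1 - q) ^ k := by
    rw [qPoch, hpc, ← Finset.prod_mul_distrib]
    refine Finset.prod_congr rfl fun j hj => ?_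
    rw [div_mul_cancel₀ _ hq]
    congr 1
    rw [show (j:ℝ) - n = -(n:ℝ) + j by ring, Real.rpow_add hq0, Real.rpow_natCast]
    congr 1
    rw [← Real.rpow_intCast q (-(n:ℤ))]
    push_cast
    ring_nf
  have hB : qPoch (q ^ α * q) q k =
      (∏ j ∈ Finset.range k, (1 - q ^ (α + 1 + (j:ℝ))) / (1 - q)) * (1 - q) ^ k := by
    rw [qPoch, hpc, ← Finset.prod_mul_distrib]
    refine Finset.prod_congr rfl fun j hj => ?_
    rw [div_mul_cancel₀ _ hq]
    congr 1
    rw [Real.rpow_add hq0, Real.rpow_add hq0, Real.rpow_one, Real.rpow_natCast]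
  have hC : qPoch (q ^ β / (q - 1) * q) q k =
      (∏ j ∈ Finset.range k, ((1 - q) + q ^ (β + 1 + (j:ℝ)))) / (1 - q) ^ k := by
    rw [qPoch, hpc, ← Finset.prod_div_distrib]
    refine Finset.prod_congr rfl fun j hj => ?_
    have h1 : q ^ (β + 1 + (j:ℝ)) = q ^ β * q * (q ^ j : ℝ) := by
      rw [Real.rpow_add hq0, Real.rpow_add hq0, Real.rpow_one, Real.rpow_natCast]
    rw [h1]
    field_simp
    ring
  have hD : qPoch q q k =
      (∏ j ∈ Finset.range k, (1 - q ^ ((j:ℝ) + 1)) / (1 - q)) * (1 - q) ^ k := by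
    rw [qPoch, hpc, ← Finset.prod_mul_distrib]
    refine Finset.prod_congr rfl fun j hj => ?_
    rw [div_mul_cancel₀ _ hq]
    congr 1
    rw [Real.rpow_add hq0, Real.rpow_one, Real.rpow_natCast]
    ring
  rw [hA, hB, hC, hD, qPoch]
  set A := ∏ j ∈ Finset.range k, (1 - q ^ ((j:ℝ) - n)) / (1 - q) with hA'
  set X := ∏ j ∈ Finset.range k, (1 - x * q ^ j) with hX'
  set B := ∏ j ∈ Finset.range k, (1 - q ^ (α + 1 + (j:ℝ))) / (1 - q) with hB'
  set C := ∏ j ∈ Finset.range k, ((1 - q) + q ^ (β + 1 + (j:ℝ))) with hC'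
  set D := ∏ j ∈ Finset.range k, (1 - q ^ ((j:ℝ) + 1)) / (1 - q) with hD'
  have hden : B * (1 - q) ^ k * (C / (1 - q) ^ k) * (D * (1 - q) ^ k) = B * C * D * (1 - q) ^ k := by
    field_simp
  rw [hden]
  have hnum : A * (1 - q) ^ k * X * q ^ k = A * X * q ^ k * (1 - q) ^ k := by ring
  rw [hnum, mul_div_mul_right _ _ ht]

lemma norm_term_lim (n k : ℕ) (α β x : ℝ) (hα : -1 < α) :
    Tendsto (fun q : ℝ =>
      ((∏ j ∈ Finset.range k, (1 - q ^ ((j:ℝ) - n)) / (1 - q)) *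
         (∏ j ∈ Finset.range k, (1 - x * q ^ j)) * q ^ k) /
        ((∏ j ∈ Finset.range k, (1 - q ^ (α + 1 + (j:ℝ))) / (1 - q)) *
         (∏ j ∈ Finset.range k, ((1 - q) + q ^ (β + 1 + (j:ℝ)))) *
         (∏ j ∈ Finset.range k, (1 - q ^ ((j:ℝ) + 1)) / (1 - q))))
      (nhdsWithin 1 (Set.Ioo 0 1))
      (nhds ((∏ j ∈ Finset.range k, ((j:ℝ) - n)) * (1 - x) ^ k /
        ((∏ j ∈ Finset.range k, (α + 1 + (j:ℝ))) * (∏ j ∈ Finset.range k, ((j:ℝ) + 1))))) := by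
  have hA : Tendsto (fun q : ℝ => ∏ j ∈ Finset.range k, (1 - q ^ ((j:ℝ) - n)) / (1 - q))
      (nhdsWithin 1 (Set.Ioo 0 1)) (nhds (∏ j ∈ Finset.range k, ((j:ℝ) - n))) :=
    tendsto_finset_prod _ (fun j _ => slope_lim _)
  have hX : Tendsto (fun q : ℝ => ∏ j ∈ Finset.range k, (1 - x * q ^ j))
      (nhdsWithin 1 (Set.Ioo 0 1)) (nhds ((1 - x) ^ k)) := by
    have : ((1:ℝ) - x) ^ k = ∏ _j ∈ Finset.range k, (1 - x) := by
      rw [Finset.prod_const, Finset.card_range]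
    rw [this]
    refine tendsto_finset_prod _ (fun j _ => ?_)
    have : Tendsto (fun q : ℝ => 1 - x * q ^ j) (nhds 1) (nhds (1 - x * 1 ^ j)) :=
      (continuous_const.sub (continuous_const.mul (continuous_pow j))).tendsto 1
    simpa using this.mono_left nhdsWithin_le_nhds
  have hQ : Tendsto (fun q : ℝ => q ^ k) (nhdsWithin 1 (Set.Ioo 0 1)) (nhds 1) := by
    have := (continuous_pow k (M := ℝ)).tendsto 1
    simpa using this.mono_left nhdsWithin_le_nhds
  have hB : Tendsto (fun q : ℝ => ∏ j ∈ Finset.range k, (1 - q ^ (α + 1 + (j:ℝ))) / (1 - q))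
      (nhdsWithin 1 (Set.Ioo 0 1)) (nhds (∏ j ∈ Finset.range k, (α + 1 + (j:ℝ)))) :=
    tendsto_finset_prod _ (fun j _ => slope_lim _)
  have hC : Tendsto (fun q : ℝ => ∏ j ∈ Finset.range k, ((1 - q) + q ^ (β + 1 + (j:ℝ))))
      (nhdsWithin 1 (Set.Ioo 0 1)) (nhds 1) := by
    have ha : Tendsto (fun q : ℝ => 1 - q) (nhdsWithin 1 (Set.Ioo 0 1)) (nhds (1 - 1)) :=
      ((continuous_const.sub continuous_id).tendsto 1).mono_left nhdsWithin_le_nhds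
    have := tendsto_finset_prod (Finset.range k)
      (fun j (_ : j ∈ Finset.range k) => ha.add (rpow_lim (β + 1 + (j:ℝ))))
    simpa using this
  have hD : Tendsto (fun q : ℝ => ∏ j ∈ Finset.range k, (1 - q ^ ((j:ℝ) + 1)) / (1 - q))
      (nhdsWithin 1 (Set.Ioo 0 1)) (nhds (∏ j ∈ Finset.range k, ((j:ℝ) + 1))) :=
    tendsto_finset_prod _ (fun j _ => slope_lim _)
  have hden_ne : (∏ j ∈ Finset.range k, (α + 1 + (j:ℝ))) * 1 * (∏ j ∈ Finset.range k, ((j:ℝ) + 1)) ≠ 0 := by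
    rw [mul_one]
    refine mul_ne_zero (ne_of_gt (Finset.prod_pos fun j _ => ?_)) (ne_of_gt (Finset.prod_pos fun j _ => by positivity))
    have : (0:ℝ) ≤ (j:ℝ) := Nat.cast_nonneg j
    linarith
  have := ((hA.mul hX).mul hQ).div ((hB.mul hC).mul hD) hden_ne
  simpa only [mul_one, Pi.div_def] using this

lemma prodP (n k : ℕ) (α : ℝ) (hk : k ≤ n) :
    ∏ i ∈ Finset.range n, ((n:ℝ) + α - i) =
      (∏ i ∈ Finset.range (n - k), ((n:ℝ) + α - i)) * ∏ j ∈ Finset.range k, (α + 1 + j) := by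
  induction k with
  | zero => simp
  | succ k ih =>
    have hk' : k ≤ n := by omega
    rw [ih hk', Finset.prod_range_succ]
    have h1 : n - k = (n - (k+1)) + 1 := by omega
    rw [h1, Finset.prod_range_succ]
    have h2 : ((n - (k+1) : ℕ) : ℝ) = (n : ℝ) - (k+1) := by
      push_cast [Nat.cast_sub hk]; ring
    rw [h2]; ring

lemma prodFall (n k : ℕ) (hk : k ≤ n) :
    (∏ j ∈ Finset.range k, ((n:ℝ) - j)) * (Nat.factorial (n - k)) = Nat.factorial n := by
  induction k with
  | zero => simp
  | succ k ih =>
    have hk' : k ≤ n := by omega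
    rw [Finset.prod_range_succ]
    have h1 : n - k = (n - (k+1)) + 1 := by omega
    have := ih hk'
    rw [h1, Nat.factorial_succ] at this
    have h2 : ((n - (k+1) : ℕ) : ℝ) + 1 = (n : ℝ) - k := by
      push_cast [Nat.cast_sub hk]; ring
    push_cast at this ⊢
    nlinarith [this]

lemma prodFact (k : ℕ) : (∏ j ∈ Finset.range k, ((j:ℝ) + 1)) = Nat.factorial k := by
  induction k with
  | zero => simp
  | succ k ih => rw [Finset.prod_range_succ, ih, Nat.factorial_succ]; push_cast; ring

lemma value_eq (n k : ℕ) (α x : ℝ) (hα : -1 < α) (hk : k ≤ n) :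
    (∏ j ∈ Finset.range k, ((j:ℝ) - n)) * (1 - x) ^ k /
        ((∏ j ∈ Finset.range k, (α + 1 + (j:ℝ))) * (∏ j ∈ Finset.range k, ((j:ℝ) + 1))) =
      ((-1:ℝ) ^ k * genBinom ((n:ℝ) + α) (n - k) * (1 - x) ^ k / (Nat.factorial k)) /
        genBinom ((n:ℝ) + α) n := by
  have hsign : (∏ j ∈ Finset.range k, ((j:ℝ) - n)) =
      (-1 : ℝ) ^ k * ∏ j ∈ Finset.range k, ((n:ℝ) - j) := by
    have h : ((-1:ℝ)) ^ k = ∏ _j ∈ Finset.range k, (-1:ℝ) := by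
      rw [Finset.prod_const, Finset.card_range]
    rw [h, ← Finset.prod_mul_distrib]
    exact Finset.prod_congr rfl fun j _ => by ring
  have hQpos : (0:ℝ) < ∏ j ∈ Finset.range k, (α + 1 + (j:ℝ)) := by
    refine Finset.prod_pos fun j _ => ?_
    have : (0:ℝ) ≤ (j:ℝ) := Nat.cast_nonneg j
    linarith
  have hPpos : (0:ℝ) < ∏ i ∈ Finset.range (n - k), ((n:ℝ) + α - i) := by
    refine Finset.prod_pos fun i hi => ?_
    have hi' : i < n := lt_of_lt_of_le (Finset.mem_range.mp hi) (Nat.sub_le n k)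
    have : (i:ℝ) + 1 ≤ (n:ℝ) := by exact_mod_cast hi'
    linarith
  have hQ := ne_of_gt hQpos
  have hP := ne_of_gt hPpos
  have hkf : (Nat.factorial k : ℝ) ≠ 0 := by positivity
  have hnkf : (Nat.factorial (n - k) : ℝ) ≠ 0 := by positivity
  have hnf : (Nat.factorial n : ℝ) ≠ 0 := by positivity
  rw [genBinom, genBinom, prodP n k α hk, hsign, prodFact]
  have hF := prodFall n k hk
  field_simp
  linear_combination (1 - x) ^ k * hF

theorem bigqLaguerre_classical_limit (n : ℕ) (α β x : ℝ) (hα : -1 < α) :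
    Filter.Tendsto (fun q : ℝ => bigqLaguerre n x (q ^ α) (q ^ β / (q - 1)) q)
      (nhdsWithin 1 (Set.Ioo 0 1)) (nhds (laguerre n α (1 - x) / laguerre n α 0)) := by
  have hL0 : laguerre n α 0 = genBinom ((n:ℝ) + α) n := by
    rw [laguerre, Finset.sum_eq_single 0]
    · simp
    · intro k hk hne
      simp [zero_pow hne]
    · intro h
      simp at h
  have hval : laguerre n α (1 - x) / laguerre n α 0 =
      ∑ k ∈ Finset.range (n + 1),
        ((-1:ℝ) ^ k * genBinom ((n:ℝ) + α) (n - k) * (1 - x) ^ k / (Nat.factorial k)) /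
          genBinom ((n:ℝ) + α) n := by
    rw [hL0, laguerre, Finset.sum_div]
  rw [hval]
  simp only [bigqLaguerre]
  refine tendsto_finset_sum _ (fun k hk => ?_)
  have hkn : k ≤ n := Nat.lt_succ_iff.mp (Finset.mem_range.mp hk)
  have h1 := norm_term_lim n k α β x hα
  rw [value_eq n k α x hα hkn] at h1
  refine h1.congr' ?_
  filter_upwards [self_mem_nhdsWithin] with q hq
  exact (term_eq n k α β x q hq.1 hq.2).symm
end
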